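/- (Theorem 10, distribution relation for weight (α, β).) For every real q with 0 < q < 1, integers n ≥ 0, α ≥ 1, β ≥ 1, every real x ≥ 0, every odd positive integer d and Dirichlet character χ modulo d, Ẽ^χ_{n,q}(x | α : β) = ( [d:q^α]^n / [d:−q^β] ) · Σ_{a=0}^{d−1} (−1)^a q^{βa} χ(a) Ẽ_{n,q^d}( (x+a)/d | α : β ), where [d:−q^β] = ((−q^β)^d − 1)/(−q^β − 1) = (1 + q^{βd})/(1 + q^β). -/

import Mathlib

open scoped BigOperators

/-- `[x:q] = (q^x - 1)/(q - 1)` with real exponentiation. -/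
noncomputable def qNum (q x : ℝ) : ℝ := (q ^ x - 1) / (q - 1)

/-- `[d:-r] = ((-r)^d - 1)/(-r - 1)` for a natural number `d`. -/
noncomputable def qNumNeg (r : ℝ) (d : ℕ) : ℝ := ((-r) ^ d - 1) / (-r - 1)

/-- Weighted `q`-Euler polynomial with weight `(α, β)`:
`Ẽ_{n,q}(x|α:β) = [2:q^β] ∑_{m≥0} (-1)^m q^{βm} [m+x:q^α]^n`. -/
noncomputable def qEulerAB (q : ℝ) (α β n : ℕ) (x : ℝ) : ℝ :=
  qNum (q ^ β) 2 *
    ∑' m : ℕ, (-1 : ℝ) ^ m * q ^ (β * m) * (qNum (q ^ α) ((m : ℝ) + x)) ^ n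

/-- Dirichlet-type weighted `q`-Euler polynomial with weight `(α, β)`:
`Ẽ^χ_{n,q}(x|α:β) = [2:q^β] ∑_{m≥0} χ(m) (-1)^m q^{βm} [x+m:q^α]^n`. -/
noncomputable def qEulerChiAB (q : ℝ) (d : ℕ) (χ : DirichletCharacter ℂ d)
    (α β n : ℕ) (x : ℝ) : ℂ :=
  (qNum (q ^ β) 2 : ℂ) *
    ∑' m : ℕ, χ (m : ZMod d) * (-1 : ℂ) ^ m * (q : ℂ) ^ (β * m) *
      ((qNum (q ^ α) (x + (m : ℝ)) : ℝ) : ℂ) ^ n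

/-! Split the twisted series along the residue classes `m = a + d k`. Since `d` is odd,
`(-1)^(a + d k) = (-1)^a (-1)^k`; `χ` is `d`-periodic; and
`[x + a + d k : q^α] = [d : q^α] · [k + (x + a)/d : q^(dα)]`. So the class of `a` is
`(-1)^a q^(βa) χ(a) [d : q^α]^n` times the series of `Ẽ_{n,q^d}((x + a)/d | α : β)`, and the
prefactors match because `[2 : q^(dβ)] = [d : -q^β] · [2 : q^β]` for odd `d`. -/

open Finset

lemma qNum_two {r : ℝ} (hr : r ≠ 1) : qNum r 2 = r + 1 := by
  have : r - 1 ≠ 0 := sub_ne_zero.mpr hr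
  rw [qNum, show (2 : ℝ) = (2 : ℕ) by norm_num, Real.rpow_natCast]
  field_simp
  ring

lemma qNumNeg_mul_qNum_two {r : ℝ} (hr0 : 0 ≤ r) (hr1 : r ≠ 1) {d : ℕ} (hd : Odd d) :
    qNumNeg r d * qNum r 2 = qNum (r ^ d) 2 := by
  have hrd : r ^ d ≠ 1 := (pow_eq_one_iff_of_nonneg hr0 hd.pos.ne').not.mpr hr1
  have : r + 1 ≠ 0 := by positivity
  have : -r - 1 ≠ 0 := by linarith
  rw [qNum_two hr1, qNum_two hrd, qNumNeg, hd.neg_pow]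
  field_simp
  ring

lemma qNumNeg_pos {r : ℝ} (hr : 0 ≤ r) {d : ℕ} (hd : Odd d) : 0 < qNumNeg r d := by
  rw [qNumNeg, hd.neg_pow]
  exact div_pos_of_neg_of_neg (by linarith [pow_nonneg hr d]) (by linarith)

lemma abs_qNum_le {r x y : ℝ} (hr0 : 0 < r) (hr1 : r ≤ 1) (hxy : x ≤ y) :
    |qNum r y| ≤ (r ^ x + 1) / |r - 1| := by
  rw [qNum, abs_div]
  gcongr
  calc |r ^ y - 1| ≤ |r ^ y| + |1| := abs_sub _ _
    _ = r ^ y + 1 := by rw [abs_of_pos (Real.rpow_pos_of_pos hr0 y), abs_one]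
    _ ≤ r ^ x + 1 := by linarith [Real.rpow_le_rpow_of_exponent_ge hr0 hr1 hxy]

lemma qNum_natCast_mul {r : ℝ} (hr : 0 < r) {d : ℕ} (hd : d ≠ 0) (z : ℝ) :
    qNum r (d * z) = qNum r d * qNum (r ^ d) z := by
  by_cases hr1 : r = 1
  · simp [qNum, hr1] -- both sides are junk `0 / 0 = 0`
  have hrd : r ^ d - 1 ≠ 0 := sub_ne_zero.mpr ((pow_eq_one_iff_of_nonneg hr.le hd).not.mpr hr1)
  have : r - 1 ≠ 0 := sub_ne_zero.mpr hr1
  rw [qNum, qNum, qNum, Real.rpow_mul hr.le, Real.rpow_natCast]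
  field_simp

lemma summable_qEulerChi_series {q : ℝ} (hq0 : 0 < q) (hq1 : q < 1) {β : ℕ} (hβ : 1 ≤ β)
    {r : ℝ} (hr0 : 0 < r) (hr1 : r ≤ 1) (d n : ℕ) (χ : DirichletCharacter ℂ d) (x : ℝ) :
    Summable fun m : ℕ => χ (m : ZMod d) * (-1 : ℂ) ^ m * (q : ℂ) ^ (β * m) *
      ((qNum r (x + m) : ℝ) : ℂ) ^ n := by
  set C := (r ^ x + 1) / |r - 1|
  have hqβ : q ^ β < 1 := pow_lt_one₀ hq0.le hq1 (by omega)
  refine Summable.of_norm_bounded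
    ((summable_geometric_of_lt_one (by positivity) hqβ).mul_left (C ^ n)) fun m => ?_
  have hχ := χ.norm_le_one (m : ZMod d)
  have hqNum : |qNum r (x + m)| ≤ C := abs_qNum_le hr0 hr1 (by simp)
  simp only [norm_mul, norm_pow, norm_neg, norm_one, one_pow, mul_one, Complex.norm_real,
    Real.norm_eq_abs, abs_of_pos hq0, pow_mul]
  calc ‖χ (m : ZMod d)‖ * (q ^ β) ^ m * |qNum r (x + m)| ^ n
      ≤ 1 * (q ^ β) ^ m * C ^ n := by gcongr
    _ = C ^ n * (q ^ β) ^ m := by ring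

lemma ZMod.sum_val_eq_sum_range {M : Type*} [AddCommMonoid M] (N : ℕ) [NeZero N] (g : ℕ → M) :
    ∑ j : ZMod N, g j.val = ∑ a ∈ range N, g a := by
  obtain ⟨N, rfl⟩ := Nat.exists_eq_succ_of_ne_zero (NeZero.ne N)
  exact Fin.sum_univ_eq_sum_range g (N + 1)

lemma qEulerChi_term_residue {q : ℝ} (hq0 : 0 < q) (α β n : ℕ) {d : ℕ} (hd : Odd d)
    (χ : DirichletCharacter ℂ d) (x : ℝ) (a k : ℕ) :
    χ ((a + d * k : ℕ) : ZMod d) * (-1 : ℂ) ^ (a + d * k) * (q : ℂ) ^ (β * (a + d * k)) *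
        ((qNum (q ^ α) (x + ((a + d * k : ℕ) : ℝ)) : ℝ) : ℂ) ^ n =
      (-1 : ℂ) ^ a * (q : ℂ) ^ (β * a) * χ (a : ZMod d) * ((qNum (q ^ α) d ^ n : ℝ) : ℂ) *
        (((-1 : ℝ) ^ k * (q ^ d) ^ (β * k) * qNum ((q ^ d) ^ α) (k + (x + a) / d) ^ n : ℝ) : ℂ) := by
  have hd0 : (d : ℝ) ≠ 0 := Nat.cast_ne_zero.mpr hd.pos.ne'
  have hχ : ((a + d * k : ℕ) : ZMod d) = a := by simp
  have hsign : (-1 : ℂ) ^ (a + d * k) = (-1) ^ a * (-1) ^ k := by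
    rw [pow_add, pow_mul, hd.neg_one_pow]
  have hexp : x + ((a + d * k : ℕ) : ℝ) = d * (k + (x + a) / d) := by
    push_cast
    field_simp
    ring
  rw [hχ, hsign, hexp, qNum_natCast_mul (pow_pos hq0 α) hd.pos.ne',
    pow_right_comm q α d]
  push_cast
  ring

theorem statement18_general (q : ℝ) (hq0 : 0 < q) (hq1 : q < 1)
    (n α β : ℕ) (hβ : 1 ≤ β) (x : ℝ)
    (d : ℕ) (hdo : Odd d) (χ : DirichletCharacter ℂ d) :
    qEulerChiAB q d χ α β n x =
      (((qNum (q ^ α) d) ^ n / qNumNeg (q ^ β) d : ℝ) : ℂ) *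
        ∑ a ∈ Finset.range d,
          (-1 : ℂ) ^ a * (q : ℂ) ^ (β * a) * χ (a : ZMod d) *
            ((qEulerAB (q ^ d) α β n ((x + a) / d) : ℝ) : ℂ) := by
  have : NeZero d := ⟨hdo.pos.ne'⟩
  have hqβ : q ^ β < 1 := pow_lt_one₀ hq0.le hq1 (by omega)
  have hsummable := summable_qEulerChi_series hq0 hq1 hβ (pow_pos hq0 α)
    (pow_le_one₀ hq0.le hq1.le) d n χ x
  have hN : qNumNeg (q ^ β) d * qNum (q ^ β) 2 = qNum ((q ^ d) ^ β) 2 := by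
    rw [pow_right_comm q d β]
    exact qNumNeg_mul_qNum_two (pow_pos hq0 β).le hqβ.ne hdo
  have hN0 : (qNumNeg (q ^ β) d : ℂ) ≠ 0 :=
    Complex.ofReal_ne_zero.mpr (qNumNeg_pos (pow_pos hq0 β).le hdo).ne'
  rw [qEulerChiAB, Nat.sumByResidueClasses hsummable d, ← ZMod.sum_val_eq_sum_range d]
  simp only [qEulerChi_term_residue hq0 α β n hdo χ x, tsum_mul_left, ← Complex.ofReal_tsum,
    qEulerAB, mul_sum]
  refine sum_congr rfl fun a _ => ?_
  rw [← hN]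
  push_cast
  field_simp

theorem statement18 (q : ℝ) (hq0 : 0 < q) (hq1 : q < 1)
    (n α β : ℕ) (hα : 1 ≤ α) (hβ : 1 ≤ β) (x : ℝ) (hx : 0 ≤ x)
    (d : ℕ) (hd0 : 0 < d) (hdo : Odd d) (χ : DirichletCharacter ℂ d) :
    qEulerChiAB q d χ α β n x =
      (((qNum (q ^ α) d) ^ n / qNumNeg (q ^ β) d : ℝ) : ℂ) *
        ∑ a ∈ Finset.range d,
          (-1 : ℂ) ^ a * (q : ℂ) ^ (β * a) * χ (a : ZMod d) *
            ((qEulerAB (q ^ d) α β n ((x + a) / d) : ℝ) : ℂ) :=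
  statement18_general q hq0 hq1 n α β hβ x d hdo χ
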